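/- arXiv:0706.4104 — 2 statements merged into one kernel-verified Lean document; each statement's English description precedes it below -/
import Mathlib

section
/- Let G be a (d,ε)-regular graph on n vertices with 0 < 2ε < d ≤ 1, let c > 2, and let H be a subgraph of G with maximum degree Δ(H) ≤ (d/2 − c·ε)·n. Then the graph G' = G − H is connected, and every vertex subset X ⊆ V(G') of size at least εn satisfies |N_{G'}(X)| ≥ (1/2 + (c−2)·ε)·n. -/
/-- For disjoint vertex sets `A`, `B`, the ordered pairs `(a, b) ∈ A × B` forming an edge;
its cardinality is the number `e(A,B)` of edges between `A` and `B`. -/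
def edgesBetween {V : Type*} (G : SimpleGraph V) (A B : Set V) : Set (V × V) :=
  {x | x.1 ∈ A ∧ x.2 ∈ B ∧ G.Adj x.1 x.2}

/-- A graph `G` on `n` vertices is `(d,ε)`-regular if its minimum degree is at least `d n`,
and for every pair of disjoint vertex subsets `S, T` of sizes at least `ε n`,
`|e(S,T)/(|S||T|) − d| ≤ ε`. -/
def IsDERegular {n : ℕ} (G : SimpleGraph (Fin n)) (d ε : ℝ) : Prop :=
  (∀ v, d * n ≤ ((G.neighborSet v).ncard : ℝ)) ∧
  ∀ S T : Set (Fin n), Disjoint S T → ε * n ≤ S.ncard → ε * n ≤ T.ncard →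
    |((edgesBetween G S T).ncard : ℝ) / (S.ncard * T.ncard) - d| ≤ ε

/-- The set of all vertices adjacent in `G` to at least one vertex of `X`
(not necessarily disjoint from `X`). -/
def nbhd {V : Type*} (G : SimpleGraph V) (X : Set V) : Set V :=
  {v | ∃ x ∈ X, G.Adj x v}

/-!
Write `G' = G \ H`. Its minimum degree is at least `(d/2 + cε) n`, and if `X` has no `G'`-edges
to `Y`, then every `G`-edge between them is an `H`-edge; for disjoint `X`, `Y` of size at least
`εn` the lower regularity bound then forces `(d - ε) |Y| ≤ Δ(H)`, so `|Y \ X| ≤ (1/2 - (c-1)ε) n`.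
If `|Y| > (1/2 - (c-2)ε) n`, the set `W = X ∩ Y` therefore has at least `εn` vertices, all of
whose `G'`-neighbours lie in `M = (X ∪ Y)ᶜ`. Counting `G'`-edges from `W` to `M` against the
upper regularity bound gives `(d/2 + cε) n ≤ (d + ε) |M|`, which is incompatible with
`|M| < (1/2 + (c-2)ε) n`. Applied to `Y = N_{G'}(X)ᶜ` this is the expansion bound; connectivity
follows because two-step neighbourhoods of single vertices have more than `n/2` vertices.
-/

open Finset in
lemma ncard_edgesBetween {V : Type*} [Finite V] (K : SimpleGraph V) (S T : Set V) :
    (edgesBetween K S T).ncard = ∑ s ∈ S.toFinite.toFinset, (K.neighborSet s ∩ T).ncard := by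
  classical
  have hE : edgesBetween K S T = ↑(S.toFinite.toFinset.biUnion fun s =>
      (K.neighborSet s ∩ T).toFinite.toFinset.image (Prod.mk s)) := by
    ext ⟨a, b⟩
    simp [edgesBetween, and_comm, and_left_comm]
  rw [hE, Set.ncard_coe_finset, card_biUnion]
  · refine sum_congr rfl fun s _ => ?_
    rw [card_image_of_injective _ (Prod.mk_right_injective s), Set.ncard_eq_toFinset_card _]
  · intro x _ y _ hxy
    simp only [Function.onFun, disjoint_left, mem_image]
    rintro _ ⟨_, _, rfl⟩ ⟨_, _, h⟩
    exact hxy (Prod.ext_iff.mp h).1.symm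

lemma ncard_edgesBetween_le_mul {V : Type*} [Finite V] (K : SimpleGraph V) (S T : Set V)
    {k : ℝ} (h : ∀ s ∈ S, ((K.neighborSet s ∩ T).ncard : ℝ) ≤ k) :
    ((edgesBetween K S T).ncard : ℝ) ≤ S.ncard * k := by
  rw [ncard_edgesBetween, Set.ncard_eq_toFinset_card S, Nat.cast_sum, ← nsmul_eq_mul]
  exact Finset.sum_le_card_nsmul _ _ _ fun s hs => h s (by simpa using hs)

lemma mul_le_ncard_edgesBetween {V : Type*} [Finite V] (K : SimpleGraph V) (S T : Set V)
    {k : ℝ} (h : ∀ s ∈ S, k ≤ ((K.neighborSet s ∩ T).ncard : ℝ)) :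
    S.ncard * k ≤ ((edgesBetween K S T).ncard : ℝ) := by
  rw [ncard_edgesBetween, Set.ncard_eq_toFinset_card S, Nat.cast_sum, ← nsmul_eq_mul]
  exact Finset.card_nsmul_le_sum _ _ _ fun s hs => h s (by simpa using hs)

lemma edgesBetween_mono {V : Type*} {K L : SimpleGraph V} (h : K ≤ L) (S T : Set V) :
    edgesBetween K S T ⊆ edgesBetween L S T :=
  fun _ ⟨hs, ht, hadj⟩ => ⟨hs, ht, h hadj⟩

lemma ncard_edgesBetween_le_ncard_mul_ncard {V : Type*} [Finite V] (K : SimpleGraph V)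
    (S T : Set V) : (edgesBetween K S T).ncard ≤ S.ncard * T.ncard := by
  rw [← Set.ncard_prod]
  exact Set.ncard_le_ncard (fun _ ⟨hs, ht, _⟩ => ⟨hs, ht⟩)

lemma nbhd_singleton {V : Type*} (G : SimpleGraph V) (v : V) :
    nbhd G {v} = G.neighborSet v := by
  ext
  simp [nbhd]

lemma reachable_of_mem_nbhd_nbhd_singleton {V : Type*} {G : SimpleGraph V} {v w : V}
    (h : w ∈ nbhd G (nbhd G {v})) : G.Reachable v w := by
  obtain ⟨u, ⟨_, rfl, hvu⟩, huw⟩ := h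
  exact hvu.reachable.trans huw.reachable

lemma connected_of_lt_two_mul_ncard_nbhd_nbhd {V : Type*} [Finite V] [Nonempty V]
    (G : SimpleGraph V) (h : ∀ v, Nat.card V < 2 * (nbhd G (nbhd G {v})).ncard) :
    G.Connected := by
  refine (SimpleGraph.connected_iff G).mpr ⟨fun u v => ?_, inferInstance⟩
  obtain ⟨w, hwu, hwv⟩ : (nbhd G (nbhd G {u}) ∩ nbhd G (nbhd G {v})).Nonempty := by
    apply Set.nonempty_of_ncard_ne_zero
    have := Set.ncard_union_add_ncard_inter (nbhd G (nbhd G {u})) (nbhd G (nbhd G {v}))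
    have := Set.ncard_le_card (nbhd G (nbhd G {u}) ∪ nbhd G (nbhd G {v}))
    have := h u
    have := h v
    omega
  exact (reachable_of_mem_nbhd_nbhd_singleton hwu).trans
    (reachable_of_mem_nbhd_nbhd_singleton hwv).symm

section Regular

variable {n : ℕ} {d ε c : ℝ} {G H : SimpleGraph (Fin n)}

lemma IsDERegular.abs_ncard_edgesBetween_sub_le (hG : IsDERegular G d ε) {S T : Set (Fin n)}
    (hST : Disjoint S T) (hS : ε * n ≤ S.ncard) (hT : ε * n ≤ T.ncard) :
    |((edgesBetween G S T).ncard : ℝ) - d * (S.ncard * T.ncard)| ≤ ε * (S.ncard * T.ncard) := by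
  have hle : ((edgesBetween G S T).ncard : ℝ) ≤ S.ncard * T.ncard := by
    exact_mod_cast ncard_edgesBetween_le_ncard_mul_ncard G S T
  rcases (show (0 : ℝ) ≤ S.ncard * T.ncard by positivity).eq_or_lt with hzero | hpos
  · rw [← hzero] at hle ⊢
    simp [le_antisymm hle (Nat.cast_nonneg _)]
  · rw [← div_mul_cancel₀ ((edgesBetween G S T).ncard : ℝ) hpos.ne', ← sub_mul, abs_mul,
      abs_of_pos hpos]
    exact mul_le_mul_of_nonneg_right (hG.2 S T hST hS hT) hpos.le

lemma IsDERegular.le_ncard_neighborSet_sdiff (hG : IsDERegular G d ε)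
    (hH : ∀ v, ((H.neighborSet v).ncard : ℝ) ≤ (d / 2 - c * ε) * n) (v : Fin n) :
    (d / 2 + c * ε) * n ≤ (((G \ H).neighborSet v).ncard : ℝ) := by
  have h := Set.ncard_le_ncard_sdiff_add_ncard (G.neighborSet v) (H.neighborSet v)
  rw [← SimpleGraph.neighborSet_sdiff] at h
  have h' : ((G.neighborSet v).ncard : ℝ) ≤ ((G \ H).neighborSet v).ncard
      + (H.neighborSet v).ncard := by exact_mod_cast h
  linarith [hG.1 v, hH v]

lemma mul_le_half_of_forall_ncard_neighborSet_le
    (hH : ∀ v, ((H.neighborSet v).ncard : ℝ) ≤ (d / 2 - c * ε) * n) (v : Fin n) :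
    c * ε ≤ d / 2 := by
  have hn : (0 : ℝ) < n := by exact_mod_cast v.pos
  have := nonneg_of_mul_nonneg_left ((Nat.cast_nonneg _).trans (hH v)) hn
  linarith

lemma IsDERegular.sub_mul_ncard_le_of_forall_not_adj (hG : IsDERegular G d ε) {Δ : ℝ}
    (hH : ∀ v, ((H.neighborSet v).ncard : ℝ) ≤ Δ) {S T : Set (Fin n)} (hST : Disjoint S T)
    (hS : ε * n ≤ S.ncard) (hT : ε * n ≤ T.ncard) (hS0 : S.Nonempty)
    (hno : ∀ s ∈ S, ∀ t ∈ T, ¬ (G \ H).Adj s t) :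
    (d - ε) * T.ncard ≤ Δ := by
  have hGH : edgesBetween G S T ⊆ edgesBetween H S T := fun ⟨s, t⟩ ⟨hs, ht, hadj⟩ =>
    ⟨hs, ht, by_contra fun h => hno s hs t ht ⟨hadj, h⟩⟩
  have hmono : ((edgesBetween G S T).ncard : ℝ) ≤ (edgesBetween H S T).ncard := by
    exact_mod_cast Set.ncard_le_ncard hGH
  have hreg := (abs_le.mp (hG.abs_ncard_edgesBetween_sub_le hST hS hT)).1
  have hHST := ncard_edgesBetween_le_mul H S T fun s _ =>
    (Nat.cast_le.mpr (Set.ncard_le_ncard Set.inter_subset_left)).trans (hH s)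
  have hSpos : (0 : ℝ) < S.ncard := by exact_mod_cast (Set.ncard_pos).mpr hS0
  refine le_of_mul_le_mul_left ?_ hSpos
  linarith

lemma IsDERegular.le_mul_ncard_of_forall_neighborSet_subset (hG : IsDERegular G d ε)
    {K : SimpleGraph (Fin n)} (hK : K ≤ G) {δ : ℝ} {W M : Set (Fin n)} (hWM : Disjoint W M)
    (hW : ε * n ≤ W.ncard) (hM : ε * n ≤ M.ncard) (hW0 : W.Nonempty)
    (hδ : ∀ w ∈ W, δ ≤ ((K.neighborSet w).ncard : ℝ)) (hsub : ∀ w ∈ W, K.neighborSet w ⊆ M) :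
    δ ≤ (d + ε) * M.ncard := by
  have hlow := mul_le_ncard_edgesBetween K W M fun w hw => by
    rw [Set.inter_eq_left.mpr (hsub w hw)]
    exact hδ w hw
  have hmono : ((edgesBetween K W M).ncard : ℝ) ≤ (edgesBetween G W M).ncard := by
    exact_mod_cast Set.ncard_le_ncard (edgesBetween_mono hK W M)
  have hreg := (abs_le.mp (hG.abs_ncard_edgesBetween_sub_le hWM hW hM)).2
  have hWpos : (0 : ℝ) < W.ncard := by exact_mod_cast (Set.ncard_pos).mpr hW0
  refine le_of_mul_le_mul_left ?_ hWpos
  linarith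

lemma IsDERegular.ncard_le_of_forall_not_adj_of_disjoint (hG : IsDERegular G d ε)
    (hH : ∀ v, ((H.neighborSet v).ncard : ℝ) ≤ (d / 2 - c * ε) * n) (hε : 0 < ε) (hd1 : d ≤ 1)
    (hc : 1 ≤ c) {S T : Set (Fin n)} (hST : Disjoint S T) (hS : ε * n ≤ S.ncard)
    (hno : ∀ s ∈ S, ∀ t ∈ T, ¬ (G \ H).Adj s t) :
    (T.ncard : ℝ) ≤ (1 / 2 - (c - 1) * ε) * n := by
  obtain rfl | hn := n.eq_zero_or_pos
  · simp [T.eq_empty_of_isEmpty]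
  have hcε := mul_le_half_of_forall_ncard_neighborSet_le hH ⟨0, hn⟩
  have hn' : (0 : ℝ) < n := by exact_mod_cast hn
  by_cases hT : ε * n ≤ T.ncard
  · have hS0 : S.Nonempty := Set.nonempty_of_ncard_ne_zero <| by
      have : (0 : ℝ) < S.ncard := (mul_pos hε hn').trans_le hS
      exact_mod_cast this.ne'
    have hdε : 0 < d - ε := by nlinarith
    have hcoef : d / 2 - c * ε ≤ (d - ε) * (1 / 2 - (c - 1) * ε) := by
      nlinarith [mul_nonneg (mul_nonneg (sub_nonneg.mpr hc) (sub_nonneg.mpr hd1)) hε.le,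
        mul_nonneg (sub_nonneg.mpr hc) (mul_self_nonneg ε)]
    refine le_of_mul_le_mul_left ?_ hdε
    calc (d - ε) * T.ncard ≤ (d / 2 - c * ε) * n :=
          hG.sub_mul_ncard_le_of_forall_not_adj hH hST hS hT hS0 hno
      _ ≤ (d - ε) * (1 / 2 - (c - 1) * ε) * n := mul_le_mul_of_nonneg_right hcoef hn'.le
      _ = (d - ε) * ((1 / 2 - (c - 1) * ε) * n) := mul_assoc _ _ _
  · have : ε ≤ 1 / 2 - (c - 1) * ε := by linarith
    nlinarith

lemma IsDERegular.ncard_le_of_forall_not_adj (hG : IsDERegular G d ε)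
    (hH : ∀ v, ((H.neighborSet v).ncard : ℝ) ≤ (d / 2 - c * ε) * n) (hε : 0 < ε) (hd1 : d ≤ 1)
    (hc : 1 ≤ c) {X Y : Set (Fin n)} (hX : ε * n ≤ X.ncard)
    (hno : ∀ x ∈ X, ∀ y ∈ Y, ¬ (G \ H).Adj x y) :
    (Y.ncard : ℝ) ≤ (1 / 2 - (c - 2) * ε) * n := by
  by_contra! hY
  obtain rfl | hn := n.eq_zero_or_pos
  · simp [Y.eq_empty_of_isEmpty] at hY
  have hcε := mul_le_half_of_forall_ncard_neighborSet_le hH ⟨0, hn⟩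
  have hn' : (0 : ℝ) < n := by exact_mod_cast hn
  have hYX : ((Y \ X).ncard : ℝ) ≤ (1 / 2 - (c - 1) * ε) * n :=
    hG.ncard_le_of_forall_not_adj_of_disjoint hH hε hd1 hc Set.disjoint_sdiff_right hX
      fun x hx y hy => hno x hx y hy.1
  have hW : ε * n ≤ (X ∩ Y).ncard := by
    have h := Set.ncard_inter_add_ncard_sdiff_eq_ncard Y X
    rw [Set.inter_comm] at h
    have h' : ((X ∩ Y).ncard : ℝ) + (Y \ X).ncard = Y.ncard := by exact_mod_cast h
    nlinarith
  obtain ⟨w, hw⟩ : (X ∩ Y).Nonempty := Set.nonempty_of_ncard_ne_zero <| by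
    have : (0 : ℝ) < (X ∩ Y).ncard := (mul_pos hε hn').trans_le hW
    exact_mod_cast this.ne'
  have hWM : ∀ u ∈ X ∩ Y, (G \ H).neighborSet u ⊆ (X ∪ Y)ᶜ := by
    rintro u ⟨huX, huY⟩ v huv (hvX | hvY)
    exacts [hno v hvX u huY huv.symm, hno u huX v hvY huv]
  have hδ := hG.le_ncard_neighborSet_sdiff hH
  have hM : (d / 2 + c * ε) * n ≤ ((X ∪ Y)ᶜ.ncard : ℝ) :=
    (hδ w).trans (by exact_mod_cast Set.ncard_le_ncard (hWM w hw))
  have hMY : ((X ∪ Y)ᶜ.ncard : ℝ) + Y.ncard ≤ n := by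
    have h := Set.ncard_compl_add_ncard (X ∪ Y)
    rw [Nat.card_fin] at h
    have := Set.ncard_le_ncard (Set.subset_union_right (s := X) (t := Y))
    exact_mod_cast h ▸ Nat.add_le_add_left this _
  have hdeg := hG.le_mul_ncard_of_forall_neighborSet_subset (M := (X ∪ Y)ᶜ) sdiff_le
    (disjoint_compl_right.mono_left inf_le_sup) hW (by nlinarith) ⟨w, hw⟩ (fun u _ => hδ u) hWM
  have hd : 0 < d := by nlinarith
  have hcoef : (d + ε) * (1 / 2 + (c - 2) * ε) ≤ d / 2 + c * ε := by
    nlinarith [mul_nonneg (mul_nonneg (sub_nonneg.mpr hc) (sub_nonneg.mpr hd1)) hε.le,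
      mul_nonneg hε.le (sub_nonneg.mpr hcε), mul_pos hε hd]
  have hm : ((X ∪ Y)ᶜ.ncard : ℝ) < (1 / 2 + (c - 2) * ε) * n := by linarith
  nlinarith [mul_lt_mul_of_pos_left hm (by positivity : 0 < d + ε),
    mul_le_mul_of_nonneg_right hcoef hn'.le]

lemma IsDERegular.le_ncard_nbhd_sdiff (hG : IsDERegular G d ε)
    (hH : ∀ v, ((H.neighborSet v).ncard : ℝ) ≤ (d / 2 - c * ε) * n) (hε : 0 < ε) (hd1 : d ≤ 1)
    (hc : 1 ≤ c) {X : Set (Fin n)} (hX : ε * n ≤ X.ncard) :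
    (1 / 2 + (c - 2) * ε) * n ≤ ((nbhd (G \ H) X).ncard : ℝ) := by
  have hY := hG.ncard_le_of_forall_not_adj hH hε hd1 hc hX (Y := (nbhd (G \ H) X)ᶜ)
    fun x hx _ hy hxy => hy ⟨x, hx, hxy⟩
  have h := Set.ncard_add_ncard_compl (nbhd (G \ H) X)
  rw [Nat.card_fin] at h
  have h' : ((nbhd (G \ H) X).ncard : ℝ) + (nbhd (G \ H) X)ᶜ.ncard = n := by exact_mod_cast h
  linarith

end Regular

theorem expansion_de_regular_general {n : ℕ} (hn : 0 < n) (d ε c : ℝ)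
    (hε : 0 < 2 * ε) (hd1 : d ≤ 1) (hc : 2 < c)
    (G : SimpleGraph (Fin n)) (hG : IsDERegular G d ε)
    (H : SimpleGraph (Fin n))
    (hH : ∀ v, ((H.neighborSet v).ncard : ℝ) ≤ (d / 2 - c * ε) * n) :
    (G \ H).Connected ∧
      ∀ X : Set (Fin n), ε * n ≤ X.ncard →
        (1 / 2 + (c - 2) * ε) * n ≤ ((nbhd (G \ H) X).ncard : ℝ) := by
  have hε0 : 0 < ε := by linarith
  have hexp : ∀ X : Set (Fin n), ε * n ≤ X.ncard →
      (1 / 2 + (c - 2) * ε) * n ≤ ((nbhd (G \ H) X).ncard : ℝ) :=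
    fun _ hX => hG.le_ncard_nbhd_sdiff hH hε0 hd1 (by linarith) hX
  refine ⟨?_, hexp⟩
  have : Nonempty (Fin n) := ⟨⟨0, hn⟩⟩
  have hcε := mul_le_half_of_forall_ncard_neighborSet_le hH ⟨0, hn⟩
  have hn' : (0 : ℝ) < n := by exact_mod_cast hn
  refine connected_of_lt_two_mul_ncard_nbhd_nbhd _ fun v => ?_
  have hdeg : ε * n ≤ (nbhd (G \ H) {v}).ncard := by
    rw [nbhd_singleton]
    nlinarith [hG.le_ncard_neighborSet_sdiff hH v]
  have h := hexp _ hdeg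
  rw [Nat.card_fin]
  have : (n : ℝ) < 2 * (nbhd (G \ H) (nbhd (G \ H) {v})).ncard := by
    nlinarith [mul_pos (mul_pos (by linarith : 0 < c - 2) hε0) hn']
  exact_mod_cast this

/-- Let `G` be a `(d,ε)`-regular graph on `n ≥ 1` vertices with `0 < 2ε < d ≤ 1`, `c > 2`,
and `H` a subgraph of `G` with `Δ(H) ≤ (d/2 − cε) n`. Then `G' = G − H` is connected and
every set `X` of at least `ε n` vertices satisfies `|N_{G'}(X)| ≥ (1/2 + (c−2)ε) n`. -/
theorem expansion_de_regular {n : ℕ} (hn : 0 < n) (d ε c : ℝ)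
    (hε : 0 < 2 * ε) (hεd : 2 * ε < d) (hd1 : d ≤ 1) (hc : 2 < c)
    (G : SimpleGraph (Fin n)) (hG : IsDERegular G d ε)
    (H : SimpleGraph (Fin n)) (hHG : H ≤ G)
    (hH : ∀ v, ((H.neighborSet v).ncard : ℝ) ≤ (d / 2 - c * ε) * n) :
    (G \ H).Connected ∧
      ∀ X : Set (Fin n), ε * n ≤ X.ncard →
        (1 / 2 + (c - 2) * ε) * n ≤ ((nbhd (G \ H) X).ncard : ℝ) :=
  expansion_de_regular_general hn d ε c hε hd1 hc G hG H hH
end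

section
/- If p = p(n) ≥ (log n)⁴ / n, then almost surely in G(n,p): for every a and b with b ≤ min(a·np/15, n/15), and every two disjoint vertex subsets A, B with |A| = a and |B| = b, the number of edges between A and B is less than a·np/2. -/
/-! Union bound over the pairs `(A, B)`. If `|A| = a`, `|B| = b` and `e(A, B) ≥ k ≥ a n p / 2`,
then `k` of the `ab` potential edges between `A` and `B` are all present, which has probability
at most `C(ab, k) pᵏ ≤ qᵏ` with `q = 2e b / n ≤ 1/e`. As `k ≥ 15 b / 2`, the factor `qᵇ` cancels
the `C(n, b) ≤ (e n / b)ᵇ` choices of `B` up to `e^{3b}`, and the remaining `e^{-(k - b)}` beats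
the `nᵃ` choices of `A` because `a n p ≥ a (log n)⁴`. So each of the `(n + 1)²` classes of sizes
`(a, b)` contributes at most `exp (-(log n)⁴ / 10)`. -/

open MeasureTheory Filter
open scoped ENNReal

/-- The product Bernoulli measure on potential edges of a graph on `Fin n`,
modelling the Erdős–Rényi random graph `G(n,p)`. -/
noncomputable def erMeasure (n : ℕ) (p : ℝ) :
    Measure ({e : Sym2 (Fin n) // ¬ e.IsDiag} → Bool) :=
  Measure.pi fun _ => (PMF.bernoulli (min (Real.toNNReal p) 1) (min_le_right _ _)).toMeasure

/-- The graph on `Fin n` determined by a choice of edges. -/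
def erGraph {n : ℕ} (ω : {e : Sym2 (Fin n) // ¬ e.IsDiag} → Bool) : SimpleGraph (Fin n) :=
  SimpleGraph.fromEdgeSet {e | ∃ h : ¬ e.IsDiag, ω ⟨e, h⟩ = true}

open Finset Real

abbrev PotentialEdge (n : ℕ) := {e : Sym2 (Fin n) // ¬ e.IsDiag}

instance (n : ℕ) (p : ℝ) : IsProbabilityMeasure (erMeasure n p) := by
  unfold erMeasure; infer_instance

section PotentialEdges

variable {n : ℕ}

open Classical in
def potentialEdgesBetween (A B : Finset (Fin n)) : Finset (PotentialEdge n) :=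
  univ.filter fun e => ∃ x ∈ A, ∃ y ∈ B, e.1 = s(x, y)

lemma card_potentialEdgesBetween_le (A B : Finset (Fin n)) :
    #(potentialEdgesBetween A B) ≤ #A * #B := by
  classical
  calc #(potentialEdgesBetween A B) = #((potentialEdgesBetween A B).map (.subtype _)) :=
        (card_map _).symm
    _ ≤ #((A ×ˢ B).image fun xy => s(xy.1, xy.2)) := by
        refine card_le_card fun e he => ?_
        obtain ⟨e, he', rfl⟩ := mem_map.1 he
        obtain ⟨x, hx, y, hy, hxy⟩ := (mem_filter.1 he').2
        exact mem_image.2 ⟨(x, y), mem_product.2 ⟨hx, hy⟩, hxy.symm⟩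
    _ ≤ #(A ×ˢ B) := card_image_le
    _ = #A * #B := card_product A B

open Classical in
lemma ncard_edgesBetween_le_card_filter (ω : PotentialEdge n → Bool) {A B : Finset (Fin n)}
    (hAB : Disjoint A B) :
    (edgesBetween (erGraph ω) A B).ncard ≤
      #((potentialEdgesBetween A B).filter (ω · = true)) := by
  set S := (potentialEdgesBetween A B).filter (ω · = true)
  have hmaps : ∀ xy ∈ edgesBetween (erGraph ω) A B,
      s(xy.1, xy.2) ∈ (S.map (.subtype _) : Set (Sym2 (Fin n))) := by
    rintro ⟨x, y⟩ ⟨hx, hy, hadj⟩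
    obtain ⟨⟨hdiag, hω⟩, -⟩ := (SimpleGraph.fromEdgeSet_adj _).1 hadj
    exact mem_map.2 ⟨⟨s(x, y), hdiag⟩,
      mem_filter.2 ⟨mem_filter.2 ⟨mem_univ _, x, hx, y, hy, rfl⟩, hω⟩, rfl⟩
  have hinj : Set.InjOn (fun xy : Fin n × Fin n => s(xy.1, xy.2))
      (edgesBetween (erGraph ω) A B) := by
    rintro ⟨x, y⟩ ⟨hx, hy, -⟩ ⟨x', y'⟩ ⟨-, hy', -⟩ hxy
    rcases Sym2.eq_iff.1 hxy with ⟨rfl, rfl⟩ | ⟨rfl, rfl⟩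
    · rfl
    · exact absurd hy' (disjoint_left.1 hAB hx)
  have := Set.ncard_le_ncard_of_injOn _ hmaps hinj (Set.toFinite _)
  rwa [Set.ncard_coe_finset, card_map] at this

end PotentialEdges

section Probability

variable {n : ℕ} (p : ℝ)

lemma erMeasure_forall_eq_true_le (T : Finset (PotentialEdge n)) :
    erMeasure n p {ω | ∀ i ∈ T, ω i = true} ≤ ENNReal.ofReal p ^ #T := by
  have hcyl : {ω : PotentialEdge n → Bool | ∀ i ∈ T, ω i = true} =
      (T : Set (PotentialEdge n)).pi fun _ => {true} := by
    ext ω; simp [Set.mem_pi]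
  rw [hcyl, erMeasure, Measure.pi_pi_finset, prod_const]
  gcongr
  rw [PMF.toMeasure_apply_singleton _ _ (measurableSet_singleton _)]
  exact ENNReal.coe_le_coe.2 (min_le_left _ _)

open Classical in
lemma erMeasure_le_card_filter_eq_true (S : Finset (PotentialEdge n)) (k : ℕ) :
    erMeasure n p {ω | k ≤ #(S.filter (ω · = true))} ≤
      (#S).choose k * ENNReal.ofReal p ^ k := by
  have hsub : {ω : PotentialEdge n → Bool | k ≤ #(S.filter (ω · = true))} ⊆
      ⋃ T ∈ S.powersetCard k, {ω | ∀ i ∈ T, ω i = true} := by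
    intro ω hω
    obtain ⟨T, hT, hTcard⟩ := exists_subset_card_eq hω
    exact Set.mem_biUnion (mem_powersetCard.2 ⟨hT.trans (filter_subset _ _), hTcard⟩)
      fun i hi => (mem_filter.1 (hT hi)).2
  calc erMeasure n p _ ≤ ∑ T ∈ S.powersetCard k, erMeasure n p {ω | ∀ i ∈ T, ω i = true} :=
        (measure_mono hsub).trans (measure_biUnion_finset_le _ _)
    _ ≤ ∑ T ∈ S.powersetCard k, ENNReal.ofReal p ^ k := by
        gcongr with T hT
        rw [← (mem_powersetCard.1 hT).2]
        exact erMeasure_forall_eq_true_le p T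
    _ = (#S).choose k * ENNReal.ofReal p ^ k := by
        rw [sum_const, card_powersetCard, nsmul_eq_mul]

lemma erMeasure_le_ncard_edgesBetween {A B : Finset (Fin n)} (hAB : Disjoint A B) (k : ℕ) :
    erMeasure n p {ω | k ≤ (edgesBetween (erGraph ω) A B).ncard} ≤
      (#A * #B).choose k * ENNReal.ofReal p ^ k := by
  classical
  calc erMeasure n p _
      ≤ erMeasure n p {ω | k ≤ #((potentialEdgesBetween A B).filter (ω · = true))} :=
        measure_mono fun ω hω => le_trans hω (ncard_edgesBetween_le_card_filter ω hAB)
    _ ≤ _ := erMeasure_le_card_filter_eq_true p _ k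
    _ ≤ _ := by gcongr; exact card_potentialEdgesBetween_le A B

end Probability

lemma choose_le_exp_one_mul_div_pow (m k : ℕ) : (m.choose k : ℝ) ≤ (exp 1 * m / k) ^ k := by
  rcases k.eq_zero_or_pos with rfl | hk
  · simp
  have hk' : (k : ℝ) ≠ 0 := by positivity
  calc (m.choose k : ℝ) ≤ m ^ k / k.factorial := Nat.choose_le_pow_div k m
    _ = (m / k : ℝ) ^ k * ((k : ℝ) ^ k / k.factorial) := by
        rw [← mul_div_assoc, div_pow, div_mul_cancel₀ _ (pow_ne_zero _ hk')]
    _ ≤ (m / k : ℝ) ^ k * exp k := by gcongr; exact pow_div_factorial_le_exp _ k.cast_nonneg k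
    _ = (exp 1 * m / k) ^ k := by rw [← exp_one_pow]; ring

lemma choose_mul_pow_le_pow (m k : ℕ) {p : ℝ} (hp : 0 ≤ p) :
    (m.choose k : ℝ) * p ^ k ≤ (exp 1 * m * p / k) ^ k :=
  calc (m.choose k : ℝ) * p ^ k ≤ (exp 1 * m / k) ^ k * p ^ k := by
        gcongr; exact choose_le_exp_one_mul_div_pow m k
    _ = (exp 1 * m * p / k) ^ k := by rw [← mul_pow]; ring

lemma choose_mul_two_mul_exp_one_mul_div_pow_le {n b : ℕ} (hn : n ≠ 0) (hb : b ≠ 0) :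
    (n.choose b : ℝ) * (2 * exp 1 * b / n) ^ b ≤ exp 3 ^ b :=
  calc (n.choose b : ℝ) * (2 * exp 1 * b / n) ^ b
      ≤ (exp 1 * n / b) ^ b * (2 * exp 1 * b / n) ^ b := by
        gcongr; exact choose_le_exp_one_mul_div_pow n b
    _ = (2 * exp 1 ^ 2) ^ b := by rw [← mul_pow]; congr 1; field_simp
    _ ≤ (exp 1 * exp 1 ^ 2) ^ b := by gcongr; linarith [add_one_le_exp 1]
    _ = exp 3 ^ b := by rw [← pow_succ', exp_one_pow]; norm_num

lemma sum_inv_choose_card (n : ℕ) : ∑ A : Finset (Fin n), ((n.choose #A : ℝ))⁻¹ = n + 1 := by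
  rw [← powerset_univ, sum_powerset_apply_card fun m => ((n.choose m : ℝ))⁻¹, card_univ,
    Fintype.card_fin]
  calc ∑ m ∈ range (n + 1), n.choose m • ((n.choose m : ℝ))⁻¹
      = ∑ m ∈ range (n + 1), (1 : ℝ) := by
        refine sum_congr rfl fun m hm => ?_
        have : (n.choose m : ℝ) ≠ 0 := by
          exact_mod_cast (Nat.choose_pos (Nat.lt_succ_iff.1 (mem_range.1 hm))).ne'
        rw [nsmul_eq_mul, mul_inv_cancel₀ this]
    _ = n + 1 := by simp

lemma two_mul_exp_one_div_fifteen_le_exp_neg_one : 2 * exp 1 / 15 ≤ exp (-1) := by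
  rw [exp_neg, div_le_iff₀ (by norm_num), inv_mul_eq_div, le_div_iff₀ (exp_pos 1)]
  nlinarith [exp_pos 1, exp_one_lt_d9]

lemma mul_add_four_mul_sub_le {L x a b k : ℝ} (hL : 2 ≤ L) (hx : L ^ 4 ≤ x) (ha : 1 ≤ a)
    (hb : b ≤ a * x / 15) (hk : a * x / 2 ≤ k) : a * L + 4 * b - k ≤ -(L ^ 4) / 10 := by
  have hL₃ : 8 ≤ L ^ 3 := by nlinarith [pow_le_pow_left₀ (by norm_num) hL 3]
  have hL₄ : L - 7 * L ^ 4 / 30 ≤ -(L ^ 4) / 10 := by nlinarith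
  have hneg : L - 7 * L ^ 4 / 30 ≤ 0 := by linarith [pow_nonneg (by linarith : 0 ≤ L) 4]
  nlinarith [mul_nonpos_of_nonneg_of_nonpos (sub_nonneg.2 ha) hneg]

lemma pos_of_log_pow_four_le_mul {n : ℕ} {p : ℝ} (hL : 0 < log n) (hP : log n ^ 4 ≤ n * p) :
    0 < p :=
  pos_of_mul_pos_right ((pow_pos hL 4).trans_le hP) n.cast_nonneg

lemma choose_mul_choose_mul_choose_mul_pow_le {n a b k : ℕ} {p : ℝ} (hL : 2 ≤ log n)
    (hP : log n ^ 4 ≤ n * p) (ha : 1 ≤ a) (hb₁ : (b : ℝ) ≤ a * (n * p) / 15)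
    (hb₂ : (b : ℝ) ≤ n / 15) (hk : a * (n * p) / 2 ≤ k) :
    (n.choose a : ℝ) * n.choose b * (a * b).choose k * p ^ k ≤ exp (-(log n ^ 4) / 10) := by
  have hn : (0 : ℝ) < n := one_pos.trans ((log_pos_iff n.cast_nonneg).1 (by linarith))
  have hp : 0 < p := pos_of_log_pow_four_le_mul (by linarith) hP
  have hk₀ : (0 : ℝ) < k :=
    (div_pos (mul_pos (Nat.cast_pos.2 ha) (mul_pos hn hp)) two_pos).trans_le hk
  rcases b.eq_zero_or_pos with rfl | hb
  · rw [mul_zero, Nat.choose_eq_zero_of_lt (n := 0) (by exact_mod_cast hk₀), Nat.cast_zero,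
      mul_zero, zero_mul]
    positivity
  have hb' : (0 : ℝ) < b := by exact_mod_cast hb
  have hB := choose_mul_two_mul_exp_one_mul_div_pow_le (n := n) (by exact_mod_cast hn.ne') hb.ne'
  set q := 2 * exp 1 * b / n
  have hq : q ≤ exp (-1) := by
    refine le_trans ?_ two_mul_exp_one_div_fifteen_le_exp_neg_one
    rw [div_le_div_iff₀ hn (by norm_num)]
    nlinarith [exp_pos 1]
  have hbk : b ≤ k := by exact_mod_cast (show (b : ℝ) ≤ k by linarith)
  have hA : (n.choose a : ℝ) ≤ exp (a * log n) := by
    rw [exp_nat_mul, exp_log hn]; exact_mod_cast Nat.choose_le_pow n a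
  have hC : ((a * b).choose k : ℝ) * p ^ k ≤ q ^ k := by
    refine (choose_mul_pow_le_pow _ k hp.le).trans (pow_le_pow_left₀ (by positivity) ?_ k)
    rw [div_le_div_iff₀ hk₀ hn]
    push_cast
    nlinarith [mul_pos (exp_pos 1) hb']
  calc (n.choose a : ℝ) * n.choose b * (a * b).choose k * p ^ k
      ≤ exp (a * log n) * n.choose b * q ^ k := by
        rw [mul_assoc _ _ (p ^ k)]; gcongr
    _ = exp (a * log n) * (n.choose b * q ^ b) * q ^ (k - b) := by
        rw [← mul_assoc, mul_assoc _ _ (q ^ (k - b)), ← pow_add, Nat.add_sub_cancel' hbk]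
    _ ≤ exp (a * log n) * exp 3 ^ b * exp (-1) ^ (k - b) := by gcongr
    _ = exp (a * log n + 4 * b - k) := by
        rw [← exp_nat_mul, ← exp_nat_mul, ← exp_add, ← exp_add, Nat.cast_sub hbk]
        ring_nf
    _ ≤ exp (-(log n ^ 4) / 10) :=
        exp_le_exp.2 (mul_add_four_mul_sub_le hL hP (by exact_mod_cast ha) hb₁ hk)

def EdgesBetweenSmallSetsBounded {n : ℕ} (G : SimpleGraph (Fin n)) (p : ℝ) : Prop :=
  ∀ A B : Set (Fin n), A.Nonempty → Disjoint A B →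
    (B.ncard : ℝ) ≤ min (A.ncard * (n * p) / 15) (n / 15) →
    ((edgesBetween G A B).ncard : ℝ) < A.ncard * (n * p) / 2

open Classical in
noncomputable def smallPairs (n : ℕ) (p : ℝ) : Finset (Finset (Fin n) × Finset (Fin n)) :=
  univ.filter fun AB => AB.1.Nonempty ∧ Disjoint AB.1 AB.2 ∧
    (#AB.2 : ℝ) ≤ min (#AB.1 * (n * p) / 15) (n / 15)

lemma exists_mem_smallPairs_of_not_edgesBetweenSmallSetsBounded {n : ℕ}
    {G : SimpleGraph (Fin n)} {p : ℝ} (hG : ¬ EdgesBetweenSmallSetsBounded G p) :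
    ∃ AB ∈ smallPairs n p, (#AB.1 * (n * p) / 2 : ℝ) ≤ (edgesBetween G AB.1 AB.2).ncard := by
  classical
  simp only [EdgesBetweenSmallSetsBounded, not_forall, not_lt] at hG
  obtain ⟨A, B, hA, hAB, hB, he⟩ := hG
  refine ⟨(A.toFinset, B.toFinset), mem_filter.2 ⟨mem_univ _, ?_, ?_, ?_⟩, ?_⟩
  · exact Set.toFinset_nonempty.2 hA
  · exact Set.disjoint_toFinset.2 hAB
  · rwa [← Set.ncard_eq_toFinset_card', ← Set.ncard_eq_toFinset_card']
  · rwa [Set.coe_toFinset, Set.coe_toFinset, ← Set.ncard_eq_toFinset_card']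

lemma erMeasure_smallPair_le {n : ℕ} {p : ℝ} (hL : 2 ≤ log n) (hP : log n ^ 4 ≤ n * p)
    {A B : Finset (Fin n)} (hAB : (A, B) ∈ smallPairs n p) :
    erMeasure n p {ω | (#A * (n * p) / 2 : ℝ) ≤ (edgesBetween (erGraph ω) A B).ncard} ≤
      ENNReal.ofReal (exp (-(log n ^ 4) / 10) * (n.choose #A : ℝ)⁻¹ * (n.choose #B : ℝ)⁻¹) := by
  obtain ⟨hA, hdisj, hB⟩ : A.Nonempty ∧ Disjoint A B ∧ _ := (mem_filter.1 hAB).2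
  rw [le_min_iff] at hB
  have hp : 0 ≤ p := (pos_of_log_pow_four_le_mul (by linarith) hP).le
  have hchoose (C : Finset (Fin n)) : (0 : ℝ) < n.choose #C := by
    exact_mod_cast Nat.choose_pos (by simpa using C.card_le_univ)
  set k := ⌈(#A * (n * p) / 2 : ℝ)⌉₊
  calc erMeasure n p _ ≤ erMeasure n p {ω | k ≤ (edgesBetween (erGraph ω) A B).ncard} :=
        measure_mono fun ω hω => Nat.ceil_le.2 hω
    _ ≤ (#A * #B).choose k * ENNReal.ofReal p ^ k := erMeasure_le_ncard_edgesBetween p hdisj k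
    _ = ENNReal.ofReal ((#A * #B).choose k * p ^ k) := by
        rw [ENNReal.ofReal_mul (by positivity), ENNReal.ofReal_pow hp, ENNReal.ofReal_natCast]
    _ ≤ _ := by
        refine ENNReal.ofReal_le_ofReal ?_
        rw [mul_assoc, ← mul_inv, le_mul_inv_iff₀ (mul_pos (hchoose A) (hchoose B))]
        calc ((#A * #B).choose k : ℝ) * p ^ k * (n.choose #A * n.choose #B)
            = n.choose #A * n.choose #B * ((#A * #B).choose k : ℕ) * p ^ k := by ring
          _ ≤ _ := choose_mul_choose_mul_choose_mul_pow_le hL hP (card_pos.2 hA) hB.1 hB.2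
              (Nat.le_ceil _)

lemma erMeasure_not_edgesBetweenSmallSetsBounded_le {n : ℕ} {p : ℝ} (hL : 2 ≤ log n)
    (hP : log n ^ 4 ≤ n * p) :
    erMeasure n p {ω | ¬ EdgesBetweenSmallSetsBounded (erGraph ω) p} ≤
      ENNReal.ofReal ((n + 1) ^ 2 * exp (-(log n ^ 4) / 10)) := by
  set E := exp (-(log n ^ 4) / 10)
  set c : Finset (Fin n) → ℝ := fun C => (n.choose #C : ℝ)⁻¹
  have hsub : {ω | ¬ EdgesBetweenSmallSetsBounded (erGraph ω) p} ⊆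
      ⋃ AB ∈ smallPairs n p, {ω | (#AB.1 * (n * p) / 2 : ℝ) ≤
        (edgesBetween (erGraph ω) (AB.1 : Set (Fin n)) (AB.2 : Set (Fin n))).ncard} :=
    fun _ hω =>
      let ⟨_, hAB, he⟩ := exists_mem_smallPairs_of_not_edgesBetweenSmallSetsBounded hω
      Set.mem_biUnion hAB he
  calc erMeasure n p _
      ≤ ∑ AB ∈ smallPairs n p, erMeasure n p
          {ω | (#AB.1 * (n * p) / 2 : ℝ) ≤ (edgesBetween (erGraph ω) AB.1 AB.2).ncard} :=
        (measure_mono hsub).trans (measure_biUnion_finset_le _ _)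
    _ ≤ ∑ AB ∈ smallPairs n p, ENNReal.ofReal (E * c AB.1 * c AB.2) :=
        sum_le_sum fun _ hAB => erMeasure_smallPair_le hL hP hAB
    _ ≤ ∑ AB : Finset (Fin n) × Finset (Fin n), ENNReal.ofReal (E * c AB.1 * c AB.2) :=
        sum_le_sum_of_subset_of_nonneg (subset_univ _) fun _ _ _ => zero_le
    _ = ENNReal.ofReal ((n + 1) ^ 2 * E) := by
        rw [← ENNReal.ofReal_sum_of_nonneg fun _ _ => by positivity, Fintype.sum_prod_type]
        simp_rw [mul_assoc, ← mul_sum, ← sum_mul, c, sum_inv_choose_card]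
        congr 1
        ring

lemma add_one_sq_mul_exp_le {n : ℕ} (hL : 4 ≤ log n) :
    ((n : ℝ) + 1) ^ 2 * exp (-(log n ^ 4) / 10) ≤ 4 / n := by
  have hn : (1 : ℝ) < n := (log_pos_iff n.cast_nonneg).1 (by linarith)
  calc ((n : ℝ) + 1) ^ 2 * exp (-(log n ^ 4) / 10)
      ≤ (2 * n) ^ 2 * exp (-(log n ^ 4) / 10) := by gcongr; linarith
    _ = 4 * exp (2 * log n - log n ^ 4 / 10) := by
        rw [show 2 * log n - log n ^ 4 / 10 = log n + log n + -(log n ^ 4) / 10 by ring,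
          exp_add, exp_add, exp_log (by linarith)]
        ring
    _ ≤ 4 * exp (-log n) := by
        gcongr
        nlinarith [pow_le_pow_left₀ (by norm_num) hL 3]
    _ = 4 / n := by rw [exp_neg, exp_log (by linarith), div_eq_mul_inv]

lemma tendsto_erMeasure_not_edgesBetweenSmallSetsBounded (p : ℕ → ℝ)
    (hp : ∀ n : ℕ, log n ^ 4 / n ≤ p n) :
    Tendsto (fun n => erMeasure n (p n) {ω | ¬ EdgesBetweenSmallSetsBounded (erGraph ω) (p n)})
      atTop (nhds 0) := by
  have h4n : Tendsto (fun n : ℕ => ENNReal.ofReal (4 / n)) atTop (nhds 0) := by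
    simpa using ENNReal.tendsto_ofReal (tendsto_const_div_atTop_nhds_zero_nat (4 : ℝ))
  have hlog : ∀ᶠ n : ℕ in atTop, 4 ≤ log n :=
    (tendsto_log_atTop.comp tendsto_natCast_atTop_atTop).eventually_ge_atTop 4
  refine tendsto_of_tendsto_of_tendsto_of_le_of_le' tendsto_const_nhds h4n
    (Eventually.of_forall fun _ => zero_le) ?_
  filter_upwards [hlog] with n hL
  have hn : (0 : ℝ) < n := one_pos.trans ((log_pos_iff n.cast_nonneg).1 (by linarith))
  have hP : log n ^ 4 ≤ n * p n := by rw [mul_comm, ← div_le_iff₀ hn]; exact hp n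
  exact (erMeasure_not_edgesBetweenSmallSetsBounded_le (by linarith) hP).trans
    (ENNReal.ofReal_le_ofReal (add_one_sq_mul_exp_le hL))

theorem edges_between_small_sets_general (p : ℕ → ℝ)
    (hp : ∀ n : ℕ, (Real.log n) ^ 4 / n ≤ p n) :
    Tendsto
      (fun n : ℕ => erMeasure n (p n)
        {ω | ∀ A B : Set (Fin n), A.Nonempty → Disjoint A B →
          (B.ncard : ℝ) ≤ min (A.ncard * (n * p n) / 15) (n / 15) →
          ((edgesBetween (erGraph ω) A B).ncard : ℝ) < A.ncard * (n * p n) / 2})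
      atTop (nhds 1) := by
  have hgood := ENNReal.Tendsto.sub tendsto_const_nhds
    (tendsto_erMeasure_not_edgesBetweenSmallSetsBounded p hp) (Or.inl ENNReal.one_ne_top)
  rw [tsub_zero] at hgood
  refine hgood.congr fun n => ?_
  rw [← prob_compl_eq_one_sub MeasurableSet.of_discrete, Set.compl_ofPred]
  simp only [not_not]
  rfl

/-- If `p ≥ (log n)⁴ / n`, then a.s. in `G(n,p)` every two disjoint nonempty sets `A`, `B`
with `|A| = a` and `|B| = b ≤ min (a np/15) (n/15)` satisfy `e(A,B) < a np / 2`. -/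
theorem edges_between_small_sets (p : ℕ → ℝ)
    (hp0 : ∀ n : ℕ, 0 ≤ p n) (hp1 : ∀ n : ℕ, p n ≤ 1)
    (hp : ∀ n : ℕ, (Real.log n) ^ 4 / n ≤ p n) :
    Tendsto
      (fun n : ℕ => erMeasure n (p n)
        {ω | ∀ A B : Set (Fin n), A.Nonempty → Disjoint A B →
          (B.ncard : ℝ) ≤ min (A.ncard * (n * p n) / 15) (n / 15) →
          ((edgesBetween (erGraph ω) A B).ncard : ℝ) < A.ncard * (n * p n) / 2})
      atTop (nhds 1) :=
  edges_between_small_sets_general p hp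
end
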